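/- arXiv:2311.15644 — 8 statements merged into one kernel-verified Lean document; each statement's English description precedes it below -/
import Mathlib

section
/- Let Y be a real normed space, K ⊆ Y a pointed closed convex cone with nonempty interior, and A, B nonempty subsets of Y with B + K convex. If for every nonzero y* ∈ K⁺ one has y*(A) ⊆ y*(B) + (0,∞), then A ⊆ B + int K. -/
/-!
Suppose `a ∈ A` lies outside the open convex set `B + int K` (it is convex because it equals
`(B + K) + int K`). Separating `a` from it gives a continuous functional `f` with
`f a < f (b + u)` for all `b ∈ B`, `u ∈ int K`. Since `int K` is stable under adding elements
of `K` and under positive scaling, this forces `f ≥ 0` on `K` and `f a ≤ f b` on `B`,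
contradicting the hypothesis that `f a > f b` for some `b ∈ B`.
-/

open Pointwise Filter Topology

theorem nonneg_of_forall_lt_add_mul {x y c : ℝ} (h : ∀ t : ℝ, 0 ≤ t → x < y + t * c) :
    0 ≤ c := by
  by_contra! hc
  have key := h (|y - x| / -c) (div_nonneg (abs_nonneg _) (neg_nonneg.mpr hc.le))
  rw [div_mul_eq_mul_div, div_neg, mul_div_cancel_right₀ _ hc.ne] at key
  linarith [le_abs_self (y - x)]

theorem le_of_forall_lt_add_mul {x y c : ℝ} (h : ∀ t : ℝ, 0 < t → x < y + t * c) :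
    x ≤ y := by
  have hlim : Tendsto (fun t : ℝ => y + t * c) (𝓝[>] 0) (𝓝 y) :=
    ((by fun_prop : Continuous fun t : ℝ => y + t * c).tendsto' 0 y (by simp)).mono_left
      nhdsWithin_le_nhds
  exact ge_of_tendsto hlim (eventually_nhdsWithin_of_forall fun t ht => (h t ht).le)

section Cone

variable {E : Type*} [AddCommGroup E] {K : Set E}

theorem Convex.add_subset_of_smul_mem [Module ℝ E] (hKconv : Convex ℝ K)
    (hKcone : ∀ c : ℝ, 0 ≤ c → ∀ k ∈ K, c • k ∈ K) : K + K ⊆ K := by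
  rintro _ ⟨x, hx, y, hy, rfl⟩
  have hmid : (1 / 2 : ℝ) • x + (1 / 2 : ℝ) • y ∈ K :=
    hKconv hx hy (by norm_num) (by norm_num) (by norm_num)
  have h2 := hKcone 2 zero_le_two _ hmid
  rwa [smul_add, smul_smul, smul_smul, mul_one_div_cancel two_ne_zero, one_smul, one_smul]
    at h2

theorem add_interior_subset_interior [TopologicalSpace E] [IsTopologicalAddGroup E]
    (hK : K + K ⊆ K) : K + interior K ⊆ interior K :=
  subset_interior_add_right.trans (interior_mono hK)

theorem smul_mem_interior_of_smul_mem [Module ℝ E] [TopologicalSpace E]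
    [ContinuousConstSMul ℝ E] (hKcone : ∀ c : ℝ, 0 ≤ c → ∀ k ∈ K, c • k ∈ K)
    {t : ℝ} (ht : 0 < t) {u : E} (hu : u ∈ interior K) : t • u ∈ interior K := by
  have htK : t • K ⊆ K := by
    rintro _ ⟨k, hk, rfl⟩
    exact hKcone t ht.le k hk
  refine interior_mono htK ?_
  rw [interior_smul₀ ht.ne']
  exact Set.smul_mem_smul_set hu

variable [Module ℝ E] [TopologicalSpace E] [IsTopologicalAddGroup E] [ContinuousSMul ℝ E]

theorem convex_add_interior {B : Set E} (hKconv : Convex ℝ K)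
    (hKcone : ∀ c : ℝ, 0 ≤ c → ∀ k ∈ K, c • k ∈ K) (hBK : Convex ℝ (B + K)) :
    Convex ℝ (B + interior K) := by
  rcases (interior K).eq_empty_or_nonempty with hempty | ⟨u, hu⟩
  · simpa [hempty] using convex_empty
  have h0K : (0 : E) ∈ K := by simpa using hKcone 0 le_rfl u (interior_subset hu)
  have hK := add_interior_subset_interior (hKconv.add_subset_of_smul_mem hKcone)
  have hsplit : B + interior K = B + K + interior K := by
    refine subset_antisymm ?_ ?_
    · simpa using Set.add_subset_add_right (Set.add_subset_add_left
        (Set.singleton_subset_iff.mpr h0K) : B + {0} ⊆ B + K)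
    · rw [add_assoc]
      exact Set.add_subset_add_left hK
  rw [hsplit]
  exact hBK.add hKconv.interior

theorem exists_dual_nonneg_on_cone_le_of_notMem_add_interior {B : Set E} {a : E}
    (hKconv : Convex ℝ K) (hKcone : ∀ c : ℝ, 0 ≤ c → ∀ k ∈ K, c • k ∈ K)
    (hKint : (interior K).Nonempty) (hB : B.Nonempty) (hBK : Convex ℝ (B + K))
    (ha : a ∉ B + interior K) :
    ∃ f : E →L[ℝ] ℝ, f ≠ 0 ∧ (∀ k ∈ K, 0 ≤ f k) ∧ ∀ b ∈ B, f a ≤ f b := by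
  obtain ⟨f, hf⟩ := geometric_hahn_banach_point_open
    (convex_add_interior hKconv hKcone hBK) isOpen_interior.add_left ha
  replace hf : ∀ b ∈ B, ∀ u ∈ interior K, f a < f b + f u := fun b hb u hu => by
    simpa using hf (b + u) (Set.add_mem_add hb hu)
  obtain ⟨u₀, hu₀⟩ := hKint
  obtain ⟨b₀, hb₀⟩ := hB
  have hK := add_interior_subset_interior (hKconv.add_subset_of_smul_mem hKcone)
  refine ⟨f, ?_, ?_, ?_⟩
  · rintro rfl
    simpa using hf b₀ hb₀ u₀ hu₀
  · intro k hk
    refine nonneg_of_forall_lt_add_mul (x := f a) (y := f b₀ + f u₀) fun t ht => ?_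
    have := hf b₀ hb₀ _ (hK (Set.add_mem_add (hKcone t ht k hk) hu₀))
    simpa [add_comm, add_left_comm, add_assoc] using this
  · intro b hb
    refine le_of_forall_lt_add_mul (c := f u₀) fun t ht => ?_
    simpa using hf b hb _ (smul_mem_interior_of_smul_mem hKcone ht hu₀)

end Cone

theorem stmt3_general {Y : Type*} [NormedAddCommGroup Y] [NormedSpace ℝ Y]
    (K : Set Y) (hKconv : Convex ℝ K)
    (hKcone : ∀ c : ℝ, 0 ≤ c → ∀ k ∈ K, c • k ∈ K)
    (hKint : (interior K).Nonempty)
    (A B : Set Y) (hB : B.Nonempty)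
    (hBKconv : Convex ℝ (B + K))
    (h : ∀ y : Y →L[ℝ] ℝ, y ≠ 0 → (∀ k ∈ K, 0 ≤ y k) →
      y '' A ⊆ y '' B + Set.Ioi (0:ℝ)) :
    A ⊆ B + interior K := by
  intro a ha
  by_contra ha'
  obtain ⟨f, hf0, hfK, hfB⟩ :=
    exists_dual_nonneg_on_cone_le_of_notMem_add_interior hKconv hKcone hKint hB hBKconv ha'
  obtain ⟨_, ⟨b, hb, rfl⟩, r, hr, hbr⟩ := h f hf0 hfK ⟨a, ha, rfl⟩
  linarith [hfB b hb, Set.mem_Ioi.mp hr, (hbr : f b + r = f a)]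

theorem stmt3 {Y : Type*} [NormedAddCommGroup Y] [NormedSpace ℝ Y]
    (K : Set Y) (hKclosed : IsClosed K) (hKconv : Convex ℝ K)
    (hKcone : ∀ c : ℝ, 0 ≤ c → ∀ k ∈ K, c • k ∈ K)
    (hKpointed : K ∩ (-K) ⊆ {0})
    (hKint : (interior K).Nonempty)
    (A B : Set Y) (hA : A.Nonempty) (hB : B.Nonempty)
    (hBKconv : Convex ℝ (B + K))
    (h : ∀ y : Y →L[ℝ] ℝ, y ≠ 0 → (∀ k ∈ K, 0 ≤ y k) →
      y '' A ⊆ y '' B + Set.Ioi (0:ℝ)) :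
    A ⊆ B + interior K :=
  stmt3_general K hKconv hKcone hKint A B hB hBKconv h
end

section
/- Cone variant of the Rådström cancellation law: Let Y be a real normed space, K ⊆ Y a convex cone, and A, B, C ⊆ Y nonempty sets such that C is K-bounded (i.e., C ⊆ M + K for some bounded set M) and A + C ⊆ cl(C + B + K). Then A ⊆ cl(conv(B + K)). -/
/-!
Iterating `A + C ⊆ cl (C + D)` with the closed convex set `D = cl (conv (B + K))` gives
`n • a + C ⊆ cl (C + n • D)` for every `a ∈ A`, because `n • D + D = (n + 1) • D` for convex `D`.
Since `C ⊆ M + K` and `K + n • D ⊆ n • D`, a fixed `c₀ ∈ C` satisfies `c₀ + n • a ∈ cl (M + n • D)`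
with `M` bounded; dividing by `n` shows that `a` lies within `O(1/n)` of `D` for every `n`.
-/

open Pointwise Bornology

section Cone

variable {E : Type*} [AddCommGroup E] [Module ℝ E] {K : Set E}

theorem add_subset_of_convex_of_smul_mem (hKconv : Convex ℝ K)
    (hKcone : ∀ c : ℝ, 0 ≤ c → ∀ k ∈ K, c • k ∈ K) : K + K ⊆ K := by
  rintro _ ⟨k₁, hk₁, k₂, hk₂, rfl⟩
  have hmid : (1 / 2 : ℝ) • k₁ + (1 / 2 : ℝ) • k₂ ∈ K :=
    hKconv hk₁ hk₂ (by norm_num) (by norm_num) (by norm_num)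
  convert hKcone 2 (by norm_num) _ hmid using 1
  module

theorem subset_smul_of_smul_mem (hKcone : ∀ c : ℝ, 0 ≤ c → ∀ k ∈ K, c • k ∈ K) {t : ℝ}
    (ht : 0 < t) : K ⊆ t • K :=
  fun k hk => ⟨t⁻¹ • k, hKcone _ (inv_nonneg.2 ht.le) k hk, smul_inv_smul₀ ht.ne' k⟩

theorem convexHull_add_add_subset (hKconv : Convex ℝ K) (hKK : K + K ⊆ K) (B : Set E) :
    convexHull ℝ (B + K) + K ⊆ convexHull ℝ (B + K) :=
  calc convexHull ℝ (B + K) + K = convexHull ℝ (B + K + K) := by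
        rw [convexHull_add (B + K) K, hKconv.convexHull_eq]
    _ ⊆ convexHull ℝ (B + K) := by
        rw [add_assoc]
        exact convexHull_mono (Set.add_subset_add_left hKK)

theorem add_smul_subset_smul_of_add_subset (hKcone : ∀ c : ℝ, 0 ≤ c → ∀ k ∈ K, c • k ∈ K)
    {D : Set E} (hDK : D + K ⊆ D) {t : ℝ} (ht : 0 < t) : K + t • D ⊆ t • D :=
  calc K + t • D ⊆ t • K + t • D := Set.add_subset_add_right (subset_smul_of_smul_mem hKcone ht)
    _ = t • (D + K) := by rw [smul_add, add_comm]
    _ ⊆ t • D := Set.smul_set_mono hDK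

end Cone

section Closure

variable {E : Type*} [TopologicalSpace E] [AddCommGroup E] [ContinuousAdd E]

theorem closure_add_subset_closure (S T : Set E) : closure S + T ⊆ closure (S + T) :=
  (Set.add_subset_add_left subset_closure).trans (vadd_set_closure_subset S T)

theorem add_closure_subset_closure (S T : Set E) : S + closure T ⊆ closure (S + T) :=
  (Set.add_subset_add_right subset_closure).trans (vadd_set_closure_subset S T)

theorem closure_add_subset_of_add_subset {S K : Set E} (h : S + K ⊆ S) :
    closure S + K ⊆ closure S :=
  (closure_add_subset_closure S K).trans (closure_mono h)

variable [Module ℝ E]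

theorem singleton_smul_add_subset_closure_add_smul {a : E} {C D : Set E} (hD : Convex ℝ D)
    (h : {a} + C ⊆ closure (C + D)) (n : ℕ) :
    {((n : ℝ) + 1) • a} + C ⊆ closure (C + ((n : ℝ) + 1) • D) := by
  induction n with
  | zero => simpa using h
  | succ n ih =>
    have hn : (0 : ℝ) ≤ (n : ℝ) + 1 := by positivity
    calc {(((n + 1 : ℕ) : ℝ) + 1) • a} + C = {((n : ℝ) + 1) • a} + ({a} + C) := by
          rw [← add_assoc, Set.singleton_add_singleton, Nat.cast_succ, add_smul _ 1 a, one_smul]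
      _ ⊆ {((n : ℝ) + 1) • a} + closure (C + D) := Set.add_subset_add_left h
      _ ⊆ closure (({((n : ℝ) + 1) • a} + C) + D) := by
          rw [add_assoc]
          exact add_closure_subset_closure _ _
      _ ⊆ closure (closure (C + ((n : ℝ) + 1) • D) + D) :=
          closure_mono (Set.add_subset_add_right ih)
      _ ⊆ closure (C + (((n + 1 : ℕ) : ℝ) + 1) • D) := by
          rw [Nat.cast_succ, hD.add_smul hn zero_le_one, one_smul, ← add_assoc]
          exact closure_minimal (closure_add_subset_closure _ _) isClosed_closure

end Closure

theorem mem_closure_of_add_smul_mem_closure_add_smul {Y : Type*} [NormedAddCommGroup Y]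
    [NormedSpace ℝ Y] {M D : Set Y} (hM : IsBounded M) {x a : Y}
    (h : ∀ n : ℕ, x + ((n : ℝ) + 1) • a ∈ closure (M + ((n : ℝ) + 1) • D)) :
    a ∈ closure D := by
  obtain ⟨R, hR⟩ := hM.exists_norm_le
  rw [Metric.mem_closure_iff]
  intro δ hδ
  obtain ⟨n, hn⟩ := exists_nat_gt (2 * (‖x‖ + R) / δ)
  set t : ℝ := (n : ℝ) + 1
  have ht : 0 < t := by positivity
  have htδ : 2 * (‖x‖ + R) < t * δ := by
    have := (div_lt_iff₀ hδ).1 hn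
    nlinarith
  obtain ⟨_, ⟨m, hm, _, ⟨d, hd, rfl⟩, rfl⟩, hdist⟩ :=
    Metric.mem_closure_iff.1 (h n) (t * δ / 2) (by positivity)
  refine ⟨d, hd, ?_⟩
  have hsplit : t • a - t • d = (x + t • a - (m + t • d)) + (m - x) := by abel
  have hmx : ‖m - x‖ ≤ ‖x‖ + R := by linarith [norm_sub_le m x, hR m hm]
  rw [dist_eq_norm] at hdist ⊢
  have : t * ‖a - d‖ < t * δ :=
    calc t * ‖a - d‖ = ‖t • a - t • d‖ := by
          rw [← smul_sub, norm_smul, Real.norm_of_nonneg ht.le]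
      _ ≤ ‖x + t • a - (m + t • d)‖ + ‖m - x‖ := hsplit ▸ norm_add_le _ _
      _ < t * δ := by linarith
  exact lt_of_mul_lt_mul_left this ht.le

theorem stmt4_general {Y : Type*} [NormedAddCommGroup Y] [NormedSpace ℝ Y]
    (K : Set Y) (hKconv : Convex ℝ K)
    (hKcone : ∀ c : ℝ, 0 ≤ c → ∀ k ∈ K, c • k ∈ K)
    (A B C : Set Y) (hC : C.Nonempty)
    (hCbdd : ∃ M : Set Y, Bornology.IsBounded M ∧ C ⊆ M + K)
    (h : A + C ⊆ closure (C + B + K)) :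
    A ⊆ closure (convexHull ℝ (B + K)) := by
  obtain ⟨M, hM, hCM⟩ := hCbdd
  obtain ⟨c₀, hc₀⟩ := hC
  set D := closure (convexHull ℝ (B + K))
  have hDK : D + K ⊆ D := closure_add_subset_of_add_subset
    (convexHull_add_add_subset hKconv (add_subset_of_convex_of_smul_mem hKconv hKcone) B)
  intro a ha
  have hstep : {a} + C ⊆ closure (C + D) := by
    refine (Set.add_subset_add_right (Set.singleton_subset_iff.2 ha)).trans (h.trans ?_)
    rw [add_assoc]
    exact closure_mono (Set.add_subset_add_left ((subset_convexHull ℝ _).trans subset_closure))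
  refine isClosed_closure.closure_subset
    (mem_closure_of_add_smul_mem_closure_add_smul hM (x := c₀) fun n => ?_)
  have ht : (0 : ℝ) < (n : ℝ) + 1 := by positivity
  have hCD : C + ((n : ℝ) + 1) • D ⊆ M + ((n : ℝ) + 1) • D := by
    refine (Set.add_subset_add_right hCM).trans ?_
    rw [add_assoc]
    exact Set.add_subset_add_left (add_smul_subset_smul_of_add_subset hKcone hDK ht)
  refine closure_mono hCD ?_
  rw [add_comm c₀]
  exact singleton_smul_add_subset_closure_add_smul (convex_convexHull ℝ _).closure hstep n
    (Set.add_mem_add rfl hc₀)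

theorem stmt4 {Y : Type*} [NormedAddCommGroup Y] [NormedSpace ℝ Y]
    (K : Set Y) (hKconv : Convex ℝ K)
    (hKcone : ∀ c : ℝ, 0 ≤ c → ∀ k ∈ K, c • k ∈ K)
    (A B C : Set Y) (hA : A.Nonempty) (hB : B.Nonempty) (hC : C.Nonempty)
    (hCbdd : ∃ M : Set Y, Bornology.IsBounded M ∧ C ⊆ M + K)
    (h : A + C ⊆ closure (C + B + K)) :
    A ⊆ closure (convexHull ℝ (B + K)) :=
  stmt4_general K hKconv hKcone A B C hC hCbdd h
end

section
/- Let X, Y be real normed spaces, K ⊆ Y a pointed closed convex cone, F : X ⇉ Y a set-valued map with nonempty values, x̄ ∈ X, and T a bounded linear operator in the Fréchet subdifferential of F at x̄. Then for every nonzero y* ∈ K⁺, the functional y* ∘ T belongs to the Fréchet subdifferential of the set-valued map y* ∘ F at x̄. -/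
open Pointwise

/-- `T` belongs to the Fréchet subdifferential of the set-valued map `F` at `x̄`,
with respect to the ordering cone `K`. -/
def HasFrechetSubdiff {X Y : Type*} [NormedAddCommGroup X] [NormedSpace ℝ X]
    [NormedAddCommGroup Y] [NormedSpace ℝ Y]
    (F : X → Set Y) (K : Set Y) (x₀ : X) (T : X →L[ℝ] Y) : Prop :=
  ∀ ε > (0:ℝ), ∃ δ > (0:ℝ), ∀ x, ‖x - x₀‖ < δ →
    F x ⊆ F x₀ + {T (x - x₀)} + (ε * ‖x - x₀‖) • Metric.closedBall (0:Y) 1 + K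

open Metric

theorem ContinuousLinearMap.image_closedBall_zero_subset {E F : Type*}
    [NormedAddCommGroup E] [NormedSpace ℝ E] [NormedAddCommGroup F] [NormedSpace ℝ F]
    (L : E →L[ℝ] F) (r : ℝ) : L '' closedBall 0 r ⊆ closedBall 0 (‖L‖ * r) := by
  rintro _ ⟨v, hv, rfl⟩
  rw [mem_closedBall_zero_iff] at hv ⊢
  exact L.le_opNorm_of_le hv

/-- `L` scales the error ball by at most `‖L‖`; running the hypothesis with `ε / (‖L‖ + 1)`
absorbs this factor, also when `L = 0`. -/
theorem HasFrechetSubdiff.clm_comp {X Y Z : Type*} [NormedAddCommGroup X] [NormedSpace ℝ X]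
    [NormedAddCommGroup Y] [NormedSpace ℝ Y] [NormedAddCommGroup Z] [NormedSpace ℝ Z]
    {F : X → Set Y} {K : Set Y} {x₀ : X} {T : X →L[ℝ] Y} (hT : HasFrechetSubdiff F K x₀ T)
    (L : Y →L[ℝ] Z) {K' : Set Z} (hLK : L '' K ⊆ K') :
    HasFrechetSubdiff (fun x => L '' F x) K' x₀ (L.comp T) := by
  intro ε hε
  have hL : 0 < ‖L‖ + 1 := by positivity
  obtain ⟨δ, hδ, hF⟩ := hT (ε / (‖L‖ + 1)) (div_pos hε hL)
  refine ⟨δ, hδ, fun x hx => ?_⟩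
  set r := ε / (‖L‖ + 1) * ‖x - x₀‖
  have hr : 0 ≤ r := by positivity
  have hball : L '' (r • closedBall (0 : Y) 1) ⊆ (ε * ‖x - x₀‖) • closedBall (0 : Z) 1 := by
    rw [smul_unitClosedBall_of_nonneg hr, smul_unitClosedBall_of_nonneg (by positivity)]
    refine (L.image_closedBall_zero_subset r).trans (closedBall_subset_closedBall ?_)
    calc ‖L‖ * r ≤ (‖L‖ + 1) * r := by gcongr; linarith
      _ = ε * ‖x - x₀‖ := by simp only [r]; field_simp
  calc L '' F x ⊆ L '' (F x₀ + {T (x - x₀)} + r • closedBall 0 1 + K) := Set.image_mono (hF x hx)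
    _ = L '' F x₀ + {L (T (x - x₀))} + L '' (r • closedBall 0 1) + L '' K := by
      simp only [Set.image_add, Set.image_singleton]
    _ ⊆ _ := by gcongr; rfl

theorem stmt5_general {X Y : Type*} [NormedAddCommGroup X] [NormedSpace ℝ X]
    [NormedAddCommGroup Y] [NormedSpace ℝ Y]
    (K : Set Y)
    (F : X → Set Y) (x₀ : X) (T : X →L[ℝ] Y)
    (hT : HasFrechetSubdiff F K x₀ T) :
    ∀ y : Y →L[ℝ] ℝ, y ≠ 0 → (∀ k ∈ K, 0 ≤ y k) →
      HasFrechetSubdiff (fun x => y '' F x) (Set.Ici (0:ℝ)) x₀ (y.comp T) := by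
  rintro y - hyK
  exact hT.clm_comp y (Set.image_subset_iff.mpr hyK)

theorem stmt5 {X Y : Type*} [NormedAddCommGroup X] [NormedSpace ℝ X]
    [NormedAddCommGroup Y] [NormedSpace ℝ Y]
    (K : Set Y) (hKclosed : IsClosed K) (hKconv : Convex ℝ K)
    (hKcone : ∀ c : ℝ, 0 ≤ c → ∀ k ∈ K, c • k ∈ K)
    (hKpointed : K ∩ (-K) ⊆ {0})
    (F : X → Set Y) (hF : ∀ x, (F x).Nonempty) (x₀ : X) (T : X →L[ℝ] Y)
    (hT : HasFrechetSubdiff F K x₀ T) :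
    ∀ y : Y →L[ℝ] ℝ, y ≠ 0 → (∀ k ∈ K, 0 ≤ y k) →
      HasFrechetSubdiff (fun x => y '' F x) (Set.Ici (0:ℝ)) x₀ (y.comp T) :=
  stmt5_general K F x₀ T hT
end

section
/- There exists a closed convex pointed cone K in the Banach space c₀ (of real sequences converging to 0, with the supremum norm) such that D_{c₀} + K is not closed. Concretely, let f ∈ (c₀)* be f(x) = Σₙ 2⁻ⁿ xₙ, and K = {x ∈ c₀ : x₁ ≤ 0, xₙ ≥ 0 for n ≥ 2, f(x) ≥ 0}. Then K is a closed convex pointed cone and D_{c₀} + K is not closed. -/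
open Pointwise ZeroAtInfty

noncomputable def fseq : C₀(ℕ, ℝ) → ℝ := fun x => ∑' n, (2:ℝ)⁻¹ ^ (n + 1) * x n

noncomputable def Kcone : Set C₀(ℕ, ℝ) :=
  {x | x 0 ≤ 0 ∧ (∀ n : ℕ, 1 ≤ n → 0 ≤ x n) ∧ 0 ≤ fseq x}

/-!
The functional `f = fseq` is continuous, nonnegative on `K`, and `f > -1` on the closed unit ball
`D`: equality would force every coordinate of `x` to be `-1`, which no element of `c₀` has.
Hence `f > -1` on `D + K`, while `u = -2 e₀` has `f u = -1`. Yet `u` lies in the closure of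
`D + K`: for `x` in `D` with `x n ≤ 0` for `n ≥ 1`, the point `y = u - x + 4 (1 + f x) e₁`
lies in `K` (the `e₁`-term restores `f y ≥ 0`), and taking `x = -(1, …, 1, 0, …)` with longer
and longer blocks of `-1` makes `f x → -1`, so `x + y = u + 4 (1 + f x) e₁ → u`.
-/

open Filter Topology

namespace ZeroAtInftyContinuousMap

variable {α β : Type*} [TopologicalSpace α]

section Norm

variable [SeminormedAddCommGroup β]

theorem norm_apply_le (f : C₀(α, β)) (a : α) : ‖f a‖ ≤ ‖f‖ :=
  f.toBCF.norm_coe_le_norm a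

theorem norm_le {f : C₀(α, β)} {C : ℝ} (hC : 0 ≤ C) :
    ‖f‖ ≤ C ↔ ∀ a, ‖f a‖ ≤ C :=
  BoundedContinuousFunction.norm_le hC

theorem continuous_apply (a : α) : Continuous fun f : C₀(α, β) => f a :=
  (continuous_eval_const (F := BoundedContinuousFunction α β) a).comp isometry_toBCF.continuous

end Norm

theorem summable_mul_apply {w : α → ℝ} (hw : Summable w) (f : C₀(α, ℝ)) :
    Summable fun a => w a * f a :=
  .of_norm_bounded (hw.abs.mul_right ‖f‖) fun a => by
    rw [norm_mul, Real.norm_eq_abs]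
    exact mul_le_mul_of_nonneg_left (f.norm_apply_le a) (abs_nonneg _)

noncomputable def weightedTsum (w : α → ℝ) (hw : Summable w) : C₀(α, ℝ) →L[ℝ] ℝ :=
  LinearMap.mkContinuous
    { toFun := fun f => ∑' a, w a * f a
      map_add' := fun f g => by
        simp only [coe_add, Pi.add_apply, mul_add]
        exact (summable_mul_apply hw f).tsum_add (summable_mul_apply hw g)
      map_smul' := fun c f => by
        simp only [coe_smul, Pi.smul_apply, smul_eq_mul, mul_left_comm _ c, tsum_mul_left,
          RingHom.id_apply] }
    (∑' a, |w a|) fun f => by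
      have hs : Summable fun a => ‖w a * f a‖ := (summable_mul_apply hw f).norm
      calc ‖∑' a, w a * f a‖ ≤ ∑' a, ‖w a * f a‖ := norm_tsum_le_tsum_norm hs
        _ ≤ ∑' a, |w a| * ‖f‖ := by
          refine hs.tsum_le_tsum (fun a => ?_) (hw.abs.mul_right _)
          rw [norm_mul, Real.norm_eq_abs]
          exact mul_le_mul_of_nonneg_left (f.norm_apply_le a) (abs_nonneg _)
        _ = (∑' a, |w a|) * ‖f‖ := tsum_mul_right

section Discrete

variable [DiscreteTopology α] [AddCommMonoid β] [TopologicalSpace β]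

noncomputable def ofFiniteSupport (f : α → β) (hf : (Function.support f).Finite) :
    C₀(α, β) where
  toFun := f
  continuous_toFun := continuous_of_discreteTopology
  zero_at_infty' := by
    rw [cocompact_eq_cofinite]
    exact tendsto_nhds_of_eventually_eq <|
      hf.eventually_cofinite_notMem.mono fun _ => Function.notMem_support.mp

@[simp]
theorem coe_ofFiniteSupport (f : α → β) (hf : (Function.support f).Finite) :
    ⇑(ofFiniteSupport f hf) = f :=
  rfl

noncomputable def single [DecidableEq α] (i : α) (c : β) : C₀(α, β) :=
  ofFiniteSupport (Pi.single i c) ((Set.finite_singleton i).subset Pi.support_single_subset)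

@[simp]
theorem single_apply [DecidableEq α] (i : α) (c : β) (a : α) :
    single i c a = (Pi.single i c : α → β) a :=
  rfl

end Discrete

end ZeroAtInftyContinuousMap

open ZeroAtInftyContinuousMap

theorem hasSum_inv_two_pow_succ : HasSum (fun n : ℕ => (2:ℝ)⁻¹ ^ (n + 1)) 1 := by
  convert hasSum_geometric_two' 1 using 2 with n
  rw [pow_succ, inv_pow]
  ring

theorem fseq_eq_weightedTsum : fseq = ⇑(weightedTsum _ hasSum_inv_two_pow_succ.summable) :=
  rfl

theorem fseq_add (x y : C₀(ℕ, ℝ)) : fseq (x + y) = fseq x + fseq y := by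
  simp only [fseq_eq_weightedTsum, map_add]

theorem fseq_smul (c : ℝ) (x : C₀(ℕ, ℝ)) : fseq (c • x) = c * fseq x := by
  simp only [fseq_eq_weightedTsum, map_smul, smul_eq_mul]

theorem fseq_sub (x y : C₀(ℕ, ℝ)) : fseq (x - y) = fseq x - fseq y := by
  simp only [fseq_eq_weightedTsum, map_sub]

theorem continuous_fseq : Continuous fseq := by
  rw [fseq_eq_weightedTsum]
  exact (weightedTsum _ _).continuous

theorem fseq_eq_sum (x : C₀(ℕ, ℝ)) (s : Finset ℕ) (hs : ∀ n ∉ s, x n = 0) :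
    fseq x = ∑ n ∈ s, (2:ℝ)⁻¹ ^ (n + 1) * x n :=
  tsum_eq_sum fun n hn => by rw [hs n hn, mul_zero]

theorem fseq_single (i : ℕ) (c : ℝ) : fseq (single i c) = (2:ℝ)⁻¹ ^ (i + 1) * c := by
  rw [fseq_eq_sum _ {i} fun n hn => by simp_all, Finset.sum_singleton, single_apply,
    Pi.single_eq_same]

theorem isClosed_Kcone : IsClosed Kcone := by
  refine (isClosed_le (ZeroAtInftyContinuousMap.continuous_apply 0) continuous_const).inter
    ((?_ : IsClosed {x : C₀(ℕ, ℝ) | ∀ n, 1 ≤ n → 0 ≤ x n}).inter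
      (isClosed_le continuous_const continuous_fseq))
  simp only [Set.ofPred_forall]
  exact isClosed_iInter fun n => isClosed_iInter fun _ =>
    isClosed_le continuous_const (ZeroAtInftyContinuousMap.continuous_apply n)

theorem add_mem_Kcone {x y : C₀(ℕ, ℝ)} (hx : x ∈ Kcone) (hy : y ∈ Kcone) :
    x + y ∈ Kcone := by
  obtain ⟨hx0, hxn, hxf⟩ := hx
  obtain ⟨hy0, hyn, hyf⟩ := hy
  refine ⟨?_, fun n hn => ?_, ?_⟩
  · simpa using add_nonpos hx0 hy0
  · simpa using add_nonneg (hxn n hn) (hyn n hn)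
  · simpa [fseq_add] using add_nonneg hxf hyf

theorem smul_mem_Kcone {c : ℝ} (hc : 0 ≤ c) {x : C₀(ℕ, ℝ)} (hx : x ∈ Kcone) :
    c • x ∈ Kcone := by
  obtain ⟨hx0, hxn, hxf⟩ := hx
  refine ⟨?_, fun n hn => ?_, ?_⟩
  · simpa using mul_nonpos_of_nonneg_of_nonpos hc hx0
  · simpa using mul_nonneg hc (hxn n hn)
  · simpa [fseq_smul] using mul_nonneg hc hxf

theorem convex_Kcone : Convex ℝ Kcone := fun _ hx _ hy _ _ ha hb _ =>
  add_mem_Kcone (smul_mem_Kcone ha hx) (smul_mem_Kcone hb hy)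

theorem Kcone_inter_neg_subset : Kcone ∩ -Kcone ⊆ {0} := by
  rintro x ⟨⟨hx0, hxn, -⟩, hx0', hxn', -⟩
  ext n
  rcases Nat.eq_zero_or_pos n with rfl | hn
  · simp only [coe_neg, Pi.neg_apply, neg_nonpos] at hx0'
    exact le_antisymm hx0 hx0'
  · have := hxn' n hn
    simp only [coe_neg, Pi.neg_apply, neg_nonneg] at this
    exact le_antisymm this (hxn n hn)

theorem neg_one_lt_fseq {x : C₀(ℕ, ℝ)} (hx : ‖x‖ ≤ 1) : -1 < fseq x := by
  obtain ⟨N, hN⟩ : ∃ N, -1 < x N := by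
    have := zero_at_infty x
    rw [cocompact_eq_cofinite] at this
    exact (this.eventually (lt_mem_nhds neg_one_lt_zero)).exists
  have hle : ∀ n, (2:ℝ)⁻¹ ^ (n + 1) * -1 ≤ (2:ℝ)⁻¹ ^ (n + 1) * x n := fun n =>
    mul_le_mul_of_nonneg_left (neg_le_of_abs_le ((norm_apply_le x n).trans hx)) (by positivity)
  calc -1 = ∑' n : ℕ, (2:ℝ)⁻¹ ^ (n + 1) * -1 := by
        rw [tsum_mul_right, hasSum_inv_two_pow_succ.tsum_eq, one_mul]
    _ < fseq x := Summable.tsum_lt_tsum hle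
        (mul_lt_mul_of_pos_left hN (by positivity))
        (hasSum_inv_two_pow_succ.summable.mul_right _)
        (summable_mul_apply hasSum_inv_two_pow_succ.summable x)

theorem neg_one_lt_fseq_of_mem_closedBall_add_Kcone {z : C₀(ℕ, ℝ)}
    (hz : z ∈ Metric.closedBall 0 1 + Kcone) :
    -1 < fseq z := by
  obtain ⟨x, hx, y, ⟨-, -, hy⟩, rfl⟩ := hz
  rw [fseq_add]
  linarith [neg_one_lt_fseq (mem_closedBall_zero_iff.mp hx)]

theorem single_add_smul_single_mem {x : C₀(ℕ, ℝ)} (hx : ‖x‖ ≤ 1)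
    (hxn : ∀ n, 1 ≤ n → x n ≤ 0) :
    single 0 (-2) + (4 * (1 + fseq x)) • single 1 1 ∈ Metric.closedBall 0 1 + Kcone := by
  set c := 4 * (1 + fseq x)
  have hc : 0 ≤ c := by linarith [neg_one_lt_fseq hx]
  have hy (n : ℕ) : (single 0 (-2) + c • single 1 1 - x : C₀(ℕ, ℝ)) n =
      (Pi.single 0 (-2) : ℕ → ℝ) n + c * (Pi.single 1 1 : ℕ → ℝ) n - x n := rfl
  refine ⟨x, mem_closedBall_zero_iff.mpr hx, single 0 (-2) + c • single 1 1 - x,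
    ⟨?_, fun n hn => ?_, ?_⟩, add_sub_cancel _ _⟩
  · rw [hy, Pi.single_eq_same, Pi.single_eq_of_ne zero_ne_one]
    linarith [neg_le_of_abs_le ((norm_apply_le x 0).trans hx)]
  · have h0 : n ≠ 0 := by omega
    rw [hy, Pi.single_eq_of_ne h0]
    rcases eq_or_ne n 1 with rfl | h1
    · rw [Pi.single_eq_same]
      linarith [hxn 1 hn]
    · rw [Pi.single_eq_of_ne h1]
      linarith [hxn n hn]
  · rw [fseq_sub, fseq_add, fseq_smul, fseq_single, fseq_single]
    linarith

noncomputable def negIndicatorIio (k : ℕ) : C₀(ℕ, ℝ) :=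
  ofFiniteSupport ((Set.Iio k).indicator fun _ => -1)
    ((Set.finite_Iio k).subset Set.support_indicator_subset)

theorem norm_negIndicatorIio_le (k : ℕ) : ‖negIndicatorIio k‖ ≤ 1 :=
  (norm_le zero_le_one).mpr fun n => by
    by_cases h : n < k <;> simp [negIndicatorIio, h]

theorem negIndicatorIio_apply_nonpos (k n : ℕ) : negIndicatorIio k n ≤ 0 := by
  by_cases h : n < k <;> simp [negIndicatorIio, h]

theorem tendsto_fseq_negIndicatorIio :
    Tendsto (fun k => fseq (negIndicatorIio k)) atTop (𝓝 (-1)) := by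
  have hsum (k : ℕ) :
      fseq (negIndicatorIio k) = ∑ n ∈ Finset.range k, -(2:ℝ)⁻¹ ^ (n + 1) := by
    rw [fseq_eq_sum _ (Finset.range k) fun n hn => by simp_all [negIndicatorIio]]
    exact Finset.sum_congr rfl fun n hn => by simp_all [negIndicatorIio]
  simpa only [hsum] using hasSum_inv_two_pow_succ.neg.tendsto_sum_nat

theorem single_zero_neg_two_mem_closure :
    single 0 (-2 : ℝ) ∈ closure (Metric.closedBall (0 : C₀(ℕ, ℝ)) 1 + Kcone) := by
  have htend : Tendsto
      (fun k => single 0 (-2) + (4 * (1 + fseq (negIndicatorIio k))) • single 1 1) atTop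
      (𝓝 (single 0 (-2 : ℝ))) := by
    simpa using (((tendsto_fseq_negIndicatorIio.const_add 1).const_mul 4).smul_const
      (single 1 (1:ℝ))).const_add (single 0 (-2))
  exact mem_closure_of_tendsto htend <| .of_forall fun k =>
    single_add_smul_single_mem (norm_negIndicatorIio_le k) fun n _ =>
      negIndicatorIio_apply_nonpos k n

theorem single_zero_neg_two_notMem :
    single 0 (-2 : ℝ) ∉ Metric.closedBall (0 : C₀(ℕ, ℝ)) 1 + Kcone := fun h => by
  have := neg_one_lt_fseq_of_mem_closedBall_add_Kcone h
  rw [fseq_single] at this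
  norm_num at this

theorem stmt9 :
    IsClosed Kcone ∧ Convex ℝ Kcone ∧
    (∀ c : ℝ, 0 ≤ c → ∀ k ∈ Kcone, c • k ∈ Kcone) ∧
    (Kcone ∩ (-Kcone) ⊆ {0}) ∧
    ¬ IsClosed (Metric.closedBall (0 : C₀(ℕ, ℝ)) 1 + Kcone) :=
  ⟨isClosed_Kcone, convex_Kcone, fun _ hc _ hk => smul_mem_Kcone hc hk, Kcone_inter_neg_subset,
    fun hcl => single_zero_neg_two_notMem (hcl.closure_subset single_zero_neg_two_mem_closure)⟩
end

section
/- Let X be a real normed space, f : X → ℝ a function and F : X ⇉ ℝ a set-valued map with nonempty values such that F(x) + [0,∞) = f(x) + [0,∞) for every x ∈ X. Let x̄ ∈ X. If F is upper continuous at x̄, then f is lower semicontinuous at x̄. -/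
open Pointwise

theorem isLeast_of_add_Ici_eq_singleton_add_Ici {α : Type*} [AddCommMonoid α] [PartialOrder α]
    [IsOrderedAddMonoid α] {S : Set α} {c : α}
    (h : S + Set.Ici 0 = {c} + Set.Ici 0) : IsLeast S c := by
  have le_of_mem : ∀ a ∈ S, c ≤ a := by
    intro a ha
    obtain ⟨_, rfl, t, ht, hct⟩ : a + 0 ∈ {c} + Set.Ici 0 := h ▸ Set.add_mem_add ha le_rfl
    rw [add_zero] at hct
    exact hct ▸ le_add_of_nonneg_right ht
  obtain ⟨a, ha, t, ht, hat⟩ : c + 0 ∈ S + Set.Ici 0 :=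
    h.symm ▸ Set.add_mem_add (Set.mem_singleton c) le_rfl
  have hac : a ≤ c := by
    rw [add_zero] at hat
    exact hat ▸ le_add_of_nonneg_right ht
  exact ⟨le_antisymm (le_of_mem a ha) hac ▸ ha, le_of_mem⟩

theorem lowerSemicontinuousAt_of_isLeast {X α : Type*} [TopologicalSpace X] [LinearOrder α]
    [TopologicalSpace α] [OrderTopology α] {f : X → α} {F : X → Set α} {x₀ : X}
    (hleast : ∀ x, IsLeast (F x) (f x))
    (huc : ∀ V : Set α, IsOpen V → F x₀ ⊆ V → ∃ U ∈ nhds x₀, ∀ u ∈ U, F u ⊆ V) :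
    LowerSemicontinuousAt f x₀ := by
  intro y hy
  obtain ⟨U, hU, hUV⟩ :=
    huc (Set.Ioi y) isOpen_Ioi fun a ha => hy.trans_le ((hleast x₀).2 ha)
  filter_upwards [hU] with u hu
  exact hUV u hu (hleast u).1

theorem stmt10_general {X : Type*} [NormedAddCommGroup X]
    (f : X → ℝ) (F : X → Set ℝ)
    (h : ∀ x, F x + Set.Ici (0:ℝ) = {f x} + Set.Ici (0:ℝ))
    (x₀ : X)
    (huc : ∀ V : Set ℝ, IsOpen V → F x₀ ⊆ V →
      ∃ U ∈ nhds x₀, ∀ u ∈ U, F u ⊆ V) :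
    LowerSemicontinuousAt f x₀ :=
  lowerSemicontinuousAt_of_isLeast (fun x => isLeast_of_add_Ici_eq_singleton_add_Ici (h x)) huc

theorem stmt10 {X : Type*} [NormedAddCommGroup X] [NormedSpace ℝ X]
    (f : X → ℝ) (F : X → Set ℝ) (hF : ∀ x, (F x).Nonempty)
    (h : ∀ x, F x + Set.Ici (0:ℝ) = {f x} + Set.Ici (0:ℝ))
    (x₀ : X)
    (huc : ∀ V : Set ℝ, IsOpen V → F x₀ ⊆ V →
      ∃ U ∈ nhds x₀, ∀ u ∈ U, F u ⊆ V) :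
    LowerSemicontinuousAt f x₀ :=
  stmt10_general f F h x₀ huc
end

section
/- Let X be a real normed space, f : X → ℝ a function and F : X ⇉ ℝ a set-valued map with nonempty values such that F(x) + [0,∞) = f(x) + [0,∞) for every x ∈ X. Let x̄ ∈ X. If F is lower continuous at x̄, then f is upper semicontinuous at x̄. -/
/-!
Since `F x + [0, ∞) = [f x, ∞)`, the value `f x` is the least element of `F x`. Given `y > f x₀`,
the open set `(-∞, y)` meets `F x₀` at `f x₀`, so by lower continuity it meets `F u` for `u` near
`x₀`, and then `f u ≤ min (F u) < y`.
-/

open Pointwise Set Filter Topology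

def LowerContinuousAt {X α : Type*} [TopologicalSpace X] [TopologicalSpace α]
    (F : X → Set α) (x₀ : X) : Prop :=
  ∀ V : Set α, IsOpen V → (F x₀ ∩ V).Nonempty → ∃ U ∈ 𝓝 x₀, ∀ u ∈ U, (F u ∩ V).Nonempty

theorem isLeast_of_add_Ici_zero_eq_Ici {α : Type*} [AddCommGroup α] [PartialOrder α]
    [IsOrderedAddMonoid α] {s : Set α} {a : α} (h : s + Ici 0 = Ici a) : IsLeast s a := by
  have lower : a ∈ lowerBounds s := fun t ht ↦
    (h.subset ⟨t, ht, 0, self_mem_Ici, add_zero t⟩ : a ≤ t)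
  obtain ⟨t, ht, c, hc, htc⟩ : a ∈ s + Ici 0 := h ▸ self_mem_Ici
  have hta : t = a := le_antisymm (htc ▸ le_add_of_nonneg_right hc) (lower ht)
  exact ⟨hta ▸ ht, lower⟩

theorem LowerContinuousAt.upperSemicontinuousAt {X α : Type*} [TopologicalSpace X] [LinearOrder α]
    [TopologicalSpace α] [ClosedIciTopology α] {F : X → Set α} {f : X → α} {x₀ : X}
    (hF : LowerContinuousAt F x₀) (hf : ∀ x, IsLeast (F x) (f x)) :
    UpperSemicontinuousAt f x₀ := by
  intro y hy
  obtain ⟨U, hU, hUF⟩ := hF (Iio y) isOpen_Iio ⟨f x₀, (hf x₀).1, hy⟩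
  filter_upwards [hU] with u hu
  obtain ⟨z, hzF, hzy⟩ := hUF u hu
  exact ((hf u).2 hzF).trans_lt hzy

theorem stmt11_general {X : Type*} [NormedAddCommGroup X]
    (f : X → ℝ) (F : X → Set ℝ)
    (h : ∀ x, F x + Set.Ici (0:ℝ) = {f x} + Set.Ici (0:ℝ))
    (x₀ : X)
    (hlc : ∀ V : Set ℝ, IsOpen V → (F x₀ ∩ V).Nonempty →
      ∃ U ∈ nhds x₀, ∀ u ∈ U, (F u ∩ V).Nonempty) :
    UpperSemicontinuousAt f x₀ := by
  have hleast : ∀ x, IsLeast (F x) (f x) := fun x ↦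
    isLeast_of_add_Ici_zero_eq_Ici <| by
      rw [h x, singleton_add, image_const_add_Ici, add_zero]
  exact LowerContinuousAt.upperSemicontinuousAt hlc hleast

theorem stmt11 {X : Type*} [NormedAddCommGroup X] [NormedSpace ℝ X]
    (f : X → ℝ) (F : X → Set ℝ) (hF : ∀ x, (F x).Nonempty)
    (h : ∀ x, F x + Set.Ici (0:ℝ) = {f x} + Set.Ici (0:ℝ))
    (x₀ : X)
    (hlc : ∀ V : Set ℝ, IsOpen V → (F x₀ ∩ V).Nonempty →
      ∃ U ∈ nhds x₀, ∀ u ∈ U, (F u ∩ V).Nonempty) :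
    UpperSemicontinuousAt f x₀ :=
  stmt11_general f F h x₀ hlc
end

section
/- Let X, Y be real normed spaces, K ⊆ Y a pointed closed convex cone, e ∈ K \ {0}, and f : X → Y defined by f(x) = ‖x‖e. Then: (a) every operator of the form x ↦ x*(x)e with x* ∈ X*, ‖x*‖ ≤ 1, belongs to ∂̂f(0); and (b) for every y* ∈ K⁺ with y*(e) ≠ 0 and every T ∈ ∂̂f(0), the functional y*(e)⁻¹ (y* ∘ T) has norm at most 1. -/
open Pointwise

/-
(a): ‖x‖e - x*(x)e = (‖x‖ - x*(x))e lies in the cone K, so the defining inclusion holds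
with no error term at all.
(b): applying y* ≥ 0 on K to the inclusion gives y*(T x) ≤ (y*(e) + ε)‖x‖ near 0, which
positive homogeneity makes global; letting ε → 0 and replacing x by -x yields
|y*(T x)| ≤ y*(e)‖x‖.
-/

section FrechetSubdiff

variable {X Y : Type*} [NormedAddCommGroup X] [NormedSpace ℝ X]
  [NormedAddCommGroup Y] [NormedSpace ℝ Y]

theorem hasFrechetSubdiff_singleton_of_forall_sub_mem {f : X → Y} {K : Set Y} {x₀ : X}
    {T : X →L[ℝ] Y} (h : ∀ x, f x - f x₀ - T (x - x₀) ∈ K) :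
    HasFrechetSubdiff (fun x => {f x}) K x₀ T := by
  refine fun ε _ => ⟨1, one_pos, fun x _ z hz => ?_⟩
  rw [Set.mem_singleton_iff.mp hz]
  have hzero : (0 : Y) ∈ (ε * ‖x - x₀‖) • Metric.closedBall (0 : Y) 1 :=
    ⟨0, by simp, smul_zero _⟩
  have hmem := Set.add_mem_add (Set.add_mem_add (Set.add_mem_add (Set.mem_singleton (f x₀))
    (Set.mem_singleton (T (x - x₀)))) hzero) (h x)
  rwa [show f x₀ + T (x - x₀) + 0 + (f x - f x₀ - T (x - x₀)) = f x by abel] at hmem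

theorem HasFrechetSubdiff.apply_sub_le {f : X → Y} {K : Set Y} {x₀ : X} {T : X →L[ℝ] Y}
    (hT : HasFrechetSubdiff (fun x => {f x}) K x₀ T) {y : Y →L[ℝ] ℝ}
    (hy : ∀ k ∈ K, 0 ≤ y k) :
    ∀ ε > 0, ∃ δ > 0, ∀ x, ‖x - x₀‖ < δ → y (T (x - x₀)) ≤ y (f x - f x₀) + ε * ‖x - x₀‖ := by
  intro ε hε
  have hε' : 0 < ε / (‖y‖ + 1) := by positivity
  obtain ⟨δ, hδ, hδT⟩ := hT _ hε'
  refine ⟨δ, hδ, fun x hx => ?_⟩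
  obtain ⟨_, ⟨_, ⟨a, ha, b, hb, rfl⟩, _, ⟨d, hd, rfl⟩, rfl⟩, k, hk, hfx⟩ :=
    hδT x hx (Set.mem_singleton (f x))
  rw [Set.mem_singleton_iff] at ha hb
  subst ha hb
  set r := ε / (‖y‖ + 1) * ‖x - x₀‖
  have hfy : y (f x - f x₀) = y (T (x - x₀)) + r * y d + y k := by
    rw [← hfx]; simp only [map_sub, map_add, map_smul, smul_eq_mul]; ring
  have hyd : r * -‖y‖ ≤ r * y d := by
    have hd1 : ‖d‖ ≤ 1 := by simpa using hd
    have hyd := (y.le_opNorm d).trans (mul_le_of_le_one_right (norm_nonneg y) hd1)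
    exact mul_le_mul_of_nonneg_left (neg_le_of_abs_le hyd) (by positivity)
  have hry : r * ‖y‖ ≤ ε * ‖x - x₀‖ := by
    have hcoef : ε / (‖y‖ + 1) * ‖y‖ ≤ ε := by
      rw [div_mul_eq_mul_div, div_le_iff₀ (by positivity)]; nlinarith [norm_nonneg y]
    rw [mul_right_comm]
    exact mul_le_mul_of_nonneg_right hcoef (norm_nonneg _)
  linarith [hy k hk]

theorem ContinuousLinearMap.le_mul_norm_of_forall_norm_lt (φ : X →L[ℝ] ℝ) {a δ : ℝ}
    (hδ : 0 < δ) (h : ∀ x, ‖x‖ < δ → φ x ≤ a * ‖x‖) (x : X) : φ x ≤ a * ‖x‖ := by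
  rcases eq_or_ne x 0 with rfl | hx
  · simp
  have hxpos : 0 < ‖x‖ := norm_pos_iff.mpr hx
  set t := δ / (2 * ‖x‖)
  have ht : 0 < t := by positivity
  have htx : ‖t • x‖ < δ := by
    rw [norm_smul, Real.norm_of_nonneg ht.le, div_mul_eq_mul_div, mul_div_mul_right _ _ hxpos.ne']
    linarith
  have hscaled := h (t • x) htx
  rw [map_smul, smul_eq_mul, norm_smul, Real.norm_of_nonneg ht.le, mul_left_comm] at hscaled
  exact le_of_mul_le_mul_left hscaled ht

theorem ContinuousLinearMap.opNorm_le_of_forall_le_mul_norm (φ : X →L[ℝ] ℝ) {c : ℝ}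
    (hc : 0 ≤ c) (h : ∀ x, φ x ≤ c * ‖x‖) : ‖φ‖ ≤ c :=
  φ.opNorm_le_bound hc fun x => abs_le.mpr
    ⟨by simpa using neg_le_neg (h (-x)), h x⟩

open Filter Topology in
theorem HasFrechetSubdiff.opNorm_comp_le {K : Set Y} {e : Y} {T : X →L[ℝ] Y}
    (hT : HasFrechetSubdiff (fun x => {‖x‖ • e}) K 0 T) {y : Y →L[ℝ] ℝ}
    (hy : ∀ k ∈ K, 0 ≤ y k) (he : 0 ≤ y e) : ‖y.comp T‖ ≤ y e := by
  refine (y.comp T).opNorm_le_of_forall_le_mul_norm he fun x => ?_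
  have hε : ∀ ε > 0, y (T x) ≤ (y e + ε) * ‖x‖ := fun ε hε => by
    obtain ⟨δ, hδ, hyT⟩ := hT.apply_sub_le hy ε hε
    refine (y.comp T).le_mul_norm_of_forall_norm_lt hδ (fun z hz => ?_) x
    have hyTz := hyT z (by rwa [sub_zero])
    simp only [sub_zero, norm_zero, zero_smul, map_smul, smul_eq_mul] at hyTz
    rw [ContinuousLinearMap.comp_apply]
    linarith
  have hlim : Tendsto (fun ε => (y e + ε) * ‖x‖) (𝓝[>] 0) (𝓝 (y e * ‖x‖)) := by
    have : Continuous fun ε : ℝ => (y e + ε) * ‖x‖ := by fun_prop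
    simpa using (this.tendsto 0).mono_left nhdsWithin_le_nhds
  exact ge_of_tendsto hlim (eventually_nhdsWithin_of_forall hε)

end FrechetSubdiff

theorem stmt15_general {X Y : Type*} [NormedAddCommGroup X] [NormedSpace ℝ X]
    [NormedAddCommGroup Y] [NormedSpace ℝ Y]
    (K : Set Y)
    (hKcone : ∀ c : ℝ, 0 ≤ c → ∀ k ∈ K, c • k ∈ K)
    (e : Y) (he : e ∈ K) :
    (∀ x' : X →L[ℝ] ℝ, ‖x'‖ ≤ 1 →
      HasFrechetSubdiff (fun x => {‖x‖ • e}) K 0 (x'.smulRight e)) ∧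
    (∀ y : Y →L[ℝ] ℝ, (∀ k ∈ K, 0 ≤ y k) → y e ≠ 0 →
      ∀ T : X →L[ℝ] Y, HasFrechetSubdiff (fun x => {‖x‖ • e}) K 0 T →
        ‖(y e)⁻¹ • (y.comp T)‖ ≤ 1) := by
  refine ⟨fun x' hx' => hasFrechetSubdiff_singleton_of_forall_sub_mem fun x => ?_,
    fun y hy hye T hT => ?_⟩
  · have hx'x : x' x ≤ ‖x‖ := (le_abs_self _).trans (by simpa using x'.le_of_opNorm_le hx' x)
    simpa [sub_smul] using hKcone _ (sub_nonneg.mpr hx'x) e he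
  · have hye' : 0 < y e := (hy e he).lt_of_ne' hye
    rw [norm_smul, norm_inv, Real.norm_of_nonneg hye'.le]
    exact inv_mul_le_one_of_le₀ (hT.opNorm_comp_le hy hye'.le) hye'.le

theorem stmt15 {X Y : Type*} [NormedAddCommGroup X] [NormedSpace ℝ X]
    [NormedAddCommGroup Y] [NormedSpace ℝ Y]
    (K : Set Y) (hKclosed : IsClosed K) (hKconv : Convex ℝ K)
    (hKcone : ∀ c : ℝ, 0 ≤ c → ∀ k ∈ K, c • k ∈ K)
    (hKpointed : K ∩ (-K) ⊆ {0})
    (e : Y) (he : e ∈ K) (he0 : e ≠ 0) :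
    (∀ x' : X →L[ℝ] ℝ, ‖x'‖ ≤ 1 →
      HasFrechetSubdiff (fun x => {‖x‖ • e}) K 0 (x'.smulRight e)) ∧
    (∀ y : Y →L[ℝ] ℝ, (∀ k ∈ K, 0 ≤ y k) → y e ≠ 0 →
      ∀ T : X →L[ℝ] Y, HasFrechetSubdiff (fun x => {‖x‖ • e}) K 0 T →
        ‖(y e)⁻¹ • (y.comp T)‖ ≤ 1) :=
  stmt15_general K hKcone e he
end

section
/- Penalization for ideal minima: Let X, Y be real normed spaces, K ⊆ Y a closed convex cone, F : X ⇉ Y a set-valued map with nonempty values, M ⊆ X nonempty, and x̄ ∈ M an accumulation point of M. Assume F(x̄) is K-sequentially compact and x̄ is an ideal minimum for F on M, i.e., F(x̄) ⊄ F(x) + (Y \ −K) for all x ∈ M \ {x̄}. Suppose there are e ∈ K \ {0} and ℓ > 0 such that F(u) + ℓ‖u − v‖e ⊆ F(v) + K for all u ∈ X \ M and v ∈ M. Then x̄ is an ideal minimum on all of X for G(x) = F(x) + ℓ d_M(x) e, i.e., F(x̄) ⊄ G(x) + (Y \ −K) for all x ∈ X \ {x̄}. -/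
/-!
Penalization by the distance function. For `x ∈ M` the penalty vanishes and the claim is the
ideal minimality of `x₀` on `M`. For `x ∉ M`, take `vₙ ∈ M \ {x₀}` with `‖x - vₙ‖ → d_M(x)`
(possible since `x₀` is an accumulation point of `M`). Ideal minimality gives `yₙ ∈ F(x₀)` below
all of `F(vₙ)`, and the Lipschitz-type hypothesis then puts every `z + ℓ‖x - vₙ‖e`, `z ∈ F(x)`,
above `yₙ`. By `K`-sequential compactness, `yₙ - cₙ → l ∈ F(x₀)` along a subsequence with
`cₙ ∈ K`, and closedness of `K` shows that `l` lies below all of `G(x)`.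
-/

open Pointwise

def KSeqCompact {Y : Type*} [NormedAddCommGroup Y] (K A : Set Y) : Prop :=
  ∀ a : ℕ → Y, (∀ n, a n ∈ A) → ∃ c : ℕ → Y, (∀ n, c n ∈ K) ∧
    ∃ φ : ℕ → ℕ, StrictMono φ ∧ ∃ l ∈ A,
      Filter.Tendsto (fun n => a (φ n) - c (φ n)) Filter.atTop (nhds l)

open Filter Topology Metric

theorem Convex.add_mem_of_smul_mem {Y : Type*} [AddCommGroup Y] [Module ℝ Y] {K : Set Y}
    (hKconv : Convex ℝ K) (hKcone : ∀ c : ℝ, 0 ≤ c → ∀ k ∈ K, c • k ∈ K)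
    {a b : Y} (ha : a ∈ K) (hb : b ∈ K) : a + b ∈ K := by
  have hmid : (2⁻¹ : ℝ) • a + (2⁻¹ : ℝ) • b ∈ K :=
    hKconv ha hb (by norm_num) (by norm_num) (by norm_num)
  simpa [smul_add, smul_smul] using hKcone 2 zero_le_two _ hmid

theorem Set.not_subset_add_compl_neg_iff {Y : Type*} [AddCommGroup Y] {K A B : Set Y} :
    ¬ (A ⊆ B + (-K)ᶜ) ↔ ∃ y ∈ A, ∀ w ∈ B, w - y ∈ K := by
  simp only [Set.not_subset, Set.mem_add, Set.mem_compl_iff, Set.mem_neg, not_exists, not_and]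
  refine exists_congr fun y => and_congr_right fun _ => ⟨fun h w hw => ?_, fun h w hw k hk hwk => ?_⟩
  · by_contra hk
    exact h w hw (y - w) (by simpa using hk) (by abel)
  · exact hk (by simpa [← hwk] using h w hw)

theorem Metric.exists_seq_mem_tendsto_infDist {X : Type*} [PseudoMetricSpace X] (x : X)
    {S : Set X} (hS : S.Nonempty) :
    ∃ v : ℕ → X, (∀ n, v n ∈ S) ∧ Tendsto (fun n => dist x (v n)) atTop (𝓝 (infDist x S)) := by
  obtain ⟨u, -, -, hu, huS⟩ := (isGLB_infDist (x := x) hS).exists_seq_antitone_tendsto (hS.image _)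
  choose v hvS hv using huS
  exact ⟨v, hvS, by simpa only [hv] using hu⟩

theorem Metric.infDist_diff_singleton_of_mem_closure {X : Type*} [PseudoMetricSpace X] (x : X)
    {M : Set X} {x₀ : X} (hx₀ : x₀ ∈ closure (M \ {x₀})) :
    infDist x (M \ {x₀}) = infDist x M := by
  have hne : (M \ {x₀}).Nonempty := closure_nonempty_iff.mp ⟨x₀, hx₀⟩
  have hsub : M ⊆ closure (M \ {x₀}) := fun m hm => by
    by_cases h : m = x₀
    · exact h ▸ hx₀
    · exact subset_closure ⟨hm, h⟩
  refine le_antisymm ?_ (infDist_le_infDist_of_subset Set.sdiff_subset hne)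
  rw [← infDist_closure (s := M \ {x₀})]
  exact infDist_le_infDist_of_subset hsub (hne.mono Set.sdiff_subset)

theorem sub_mem_of_mem_add_of_forall_sub_mem {Y : Type*} [AddCommGroup Y] {K B : Set Y}
    (hKadd : ∀ a ∈ K, ∀ b ∈ K, a + b ∈ K) {y z : Y} (hy : ∀ w ∈ B, w - y ∈ K) (hz : z ∈ B + K) :
    z - y ∈ K := by
  obtain ⟨w, hw, k, hk, rfl⟩ := hz
  simpa [add_sub_right_comm] using hKadd _ (hy w hw) _ hk

theorem KSeqCompact.exists_forall_sub_mem_of_tendsto {Y : Type*} [NormedAddCommGroup Y]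
    [NormedSpace ℝ Y] {K A C : Set Y} (hA : KSeqCompact K A) (hK : IsClosed K)
    (hKadd : ∀ a ∈ K, ∀ b ∈ K, a + b ∈ K) {r : ℕ → ℝ} {r₀ : ℝ}
    (hr : Tendsto r atTop (𝓝 r₀)) (e : Y)
    (hlow : ∀ n, ∃ y ∈ A, ∀ z ∈ C, z + r n • e - y ∈ K) :
    ∃ l ∈ A, ∀ z ∈ C, z + r₀ • e - l ∈ K := by
  choose y hyA hy using hlow
  obtain ⟨c, hcK, φ, hφ, l, hlA, hl⟩ := hA y hyA
  refine ⟨l, hlA, fun z hz => hK.mem_of_tendsto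
    ((tendsto_const_nhds (x := z)).add ((hr.comp hφ.tendsto_atTop).smul_const e) |>.sub hl)
    (Eventually.of_forall fun n => ?_)⟩
  simpa [sub_sub_eq_add_sub, add_sub_right_comm] using hKadd _ (hy (φ n) z hz) _ (hcK (φ n))

theorem stmt18_general {X Y : Type*} [NormedAddCommGroup X] [NormedSpace ℝ X]
    [NormedAddCommGroup Y] [NormedSpace ℝ Y]
    (K : Set Y) (hKclosed : IsClosed K) (hKconv : Convex ℝ K)
    (hKcone : ∀ c : ℝ, 0 ≤ c → ∀ k ∈ K, c • k ∈ K)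
    (F : X → Set Y)
    (M : Set X) (x₀ : X)
    (hx₀acc : x₀ ∈ closure (M \ {x₀}))
    (hcomp : KSeqCompact K (F x₀))
    (hmin : ∀ x ∈ M, x ≠ x₀ → ¬ (F x₀ ⊆ F x + (-K)ᶜ))
    (e : Y) (ℓ : ℝ)
    (hlip : ∀ u ∉ M, ∀ v ∈ M,
      F u + {(ℓ * ‖u - v‖) • e} ⊆ F v + K) :
    ∀ x : X, x ≠ x₀ →
      ¬ (F x₀ ⊆ (F x + {(ℓ * Metric.infDist x M) • e}) + (-K)ᶜ) := by
  intro x hx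
  rw [Set.not_subset_add_compl_neg_iff]
  by_cases hxM : x ∈ M
  · simpa [infDist_zero_of_mem hxM] using Set.not_subset_add_compl_neg_iff.mp (hmin x hxM hx)
  have hKadd : ∀ a ∈ K, ∀ b ∈ K, a + b ∈ K := fun a ha b hb =>
    hKconv.add_mem_of_smul_mem hKcone ha hb
  obtain ⟨v, hvM, hv⟩ := exists_seq_mem_tendsto_infDist x (closure_nonempty_iff.mp ⟨x₀, hx₀acc⟩)
  rw [infDist_diff_singleton_of_mem_closure x hx₀acc] at hv
  have hlow (n : ℕ) : ∃ y ∈ F x₀, ∀ z ∈ F x, z + (ℓ * dist x (v n)) • e - y ∈ K := by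
    obtain ⟨y, hy, hyv⟩ := Set.not_subset_add_compl_neg_iff.mp (hmin _ (hvM n).1 (hvM n).2)
    refine ⟨y, hy, fun z hz => sub_mem_of_mem_add_of_forall_sub_mem hKadd hyv ?_⟩
    exact hlip x hxM (v n) (hvM n).1 (Set.add_mem_add hz (by simp [dist_eq_norm]))
  obtain ⟨l, hl, hlz⟩ :=
    hcomp.exists_forall_sub_mem_of_tendsto hKclosed hKadd (hv.const_mul ℓ) e hlow
  refine ⟨l, hl, ?_⟩
  rintro _ ⟨z, hz, _, rfl, rfl⟩
  exact hlz z hz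

theorem stmt18 {X Y : Type*} [NormedAddCommGroup X] [NormedSpace ℝ X]
    [NormedAddCommGroup Y] [NormedSpace ℝ Y]
    (K : Set Y) (hKclosed : IsClosed K) (hKconv : Convex ℝ K)
    (hKcone : ∀ c : ℝ, 0 ≤ c → ∀ k ∈ K, c • k ∈ K)
    (F : X → Set Y) (hF : ∀ x, (F x).Nonempty)
    (M : Set X) (hM : M.Nonempty) (x₀ : X) (hx₀M : x₀ ∈ M)
    (hx₀acc : x₀ ∈ closure (M \ {x₀}))
    (hcomp : KSeqCompact K (F x₀))
    (hmin : ∀ x ∈ M, x ≠ x₀ → ¬ (F x₀ ⊆ F x + (-K)ᶜ))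
    (e : Y) (he : e ∈ K) (he0 : e ≠ 0) (ℓ : ℝ) (hℓ : 0 < ℓ)
    (hlip : ∀ u ∉ M, ∀ v ∈ M,
      F u + {(ℓ * ‖u - v‖) • e} ⊆ F v + K) :
    ∀ x : X, x ≠ x₀ →
      ¬ (F x₀ ⊆ (F x + {(ℓ * Metric.infDist x M) • e}) + (-K)ᶜ) :=
  stmt18_general K hKclosed hKconv hKcone F M x₀ hx₀acc hcomp hmin e ℓ hlip
end
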